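/- Let L be a positive integer, let a, M be positive integers dividing L, and let g ∈ ℂ^L be real-valued such that the Gabor system G(g,a,M) is a frame (equivalently, its frame operator S is invertible). Then the canonical dual window S^{−1}g is real-valued. -/

import Mathlib

/-- The Gabor atom `M_{m/M} T_n g` on `ℂ^L` (identified with `ZMod L → ℂ`):
circular translation by `n` followed by modulation `e^{2πiml/M}`. -/
noncomputable def gaborAtom (L M : ℕ) [NeZero L] (g : ZMod L → ℂ) (m n : ℕ) :
    ZMod L → ℂ :=
  fun l => g (l - (n : ZMod L)) *
    Complex.exp (2 * Real.pi * Complex.I * (m : ℂ) * (l.val : ℂ) / (M : ℂ))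

/-- The inner product `⟨f, g⟩ = ∑_{l=0}^{L-1} f[l]·conj(g[l])` on `ℂ^L`. -/
noncomputable def ipL (L : ℕ) [NeZero L] (f g : ZMod L → ℂ) : ℂ :=
  ∑ l : ZMod L, f l * star (g l)

/-- The Gabor frame operator of `G(g,a,M)` on `ℂ^L`:
`Sf = ∑_{n=0}^{L/a-1} ∑_{m=0}^{M-1} ⟨f, g_{m,n}⟩ g_{m,n}` with `g_{m,n} = M_{m/M}T_{na}g`. -/
noncomputable def frameOp (L a M : ℕ) [NeZero L] (g : ZMod L → ℂ)
    (f : ZMod L → ℂ) : ZMod L → ℂ :=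
  fun l => ∑ n : Fin (L / a), ∑ m : Fin M,
    ipL L f (gaborAtom L M g m ((n : ℕ) * a)) * gaborAtom L M g m ((n : ℕ) * a) l

/-! Complex conjugation maps the Gabor atom `M_{m/M} T_n g` to `M_{-m/M} T_n ḡ`, since
`e^{2πiml/M}` depends on `m` only modulo `M`. Reindexing the modulations by `m ↦ -m` therefore
shows `S_{ḡ} f̄ = conj (S_g f)`. For real `g` this says `S` commutes with conjugation, so
`S γ̄ = ḡ = g = S γ`, and injectivity of `S` gives `γ̄ = γ`. -/

lemma star_exp_modulation (M : ℕ) [NeZero M] (m : Fin M) (x : ℕ) :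
    star (Complex.exp (2 * Real.pi * Complex.I * (m : ℕ) * x / M)) =
      Complex.exp (2 * Real.pi * Complex.I * ((-m : Fin M) : ℕ) * x / M) := by
  obtain ⟨k, hk⟩ : M ∣ ((-m : Fin M) : ℕ) + m := by
    apply Nat.dvd_of_mod_eq_zero
    rw [← Fin.val_add, neg_add_cancel, Fin.val_zero]
  have hkC : (((-m : Fin M) : ℕ) : ℂ) + ((m : ℕ) : ℂ) = M * k := by exact_mod_cast hk
  have hM : (M : ℂ) ≠ 0 := Nat.cast_ne_zero.mpr (NeZero.ne M)
  rw [Complex.star_def, ← Complex.exp_conj]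
  refine Complex.exp_eq_exp_iff_exists_int.mpr ⟨-((k * x : ℕ) : ℤ), ?_⟩
  simp only [map_div₀, map_mul, Complex.conj_I, Complex.conj_natCast, Complex.conj_ofReal,
    map_ofNat]
  push_cast
  field_simp
  linear_combination (-(x : ℂ)) * hkC

lemma star_gaborAtom (L M : ℕ) [NeZero L] [NeZero M] (g : ZMod L → ℂ) (m : Fin M) (n : ℕ) :
    star (gaborAtom L M g m n) = gaborAtom L M (star g) ((-m : Fin M) : ℕ) n := by
  funext l
  simp only [gaborAtom, Pi.star_apply, star_mul', star_exp_modulation]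

lemma ipL_star (L : ℕ) [NeZero L] (f h : ZMod L → ℂ) :
    ipL L (star f) (star h) = star (ipL L f h) := by
  simp only [ipL, Pi.star_apply, star_sum, star_mul']

lemma frameOp_star (L a M : ℕ) [NeZero L] [NeZero M] (g f : ZMod L → ℂ) :
    frameOp L a M (star g) (star f) = star (frameOp L a M g f) := by
  funext l
  simp only [frameOp, Pi.star_apply, star_sum]
  refine Finset.sum_congr rfl fun n _ => Fintype.sum_equiv (Equiv.neg (Fin M)) _ _ fun m => ?_
  have h := star_gaborAtom L M g (-m) (n * a)
  rw [neg_neg] at h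
  rw [Equiv.neg_apply, ← h, ipL_star, Pi.star_apply, star_mul']

theorem canonical_dual_real_general
    (L a M : ℕ) [NeZero L] (hM : 0 < M)
    (g : ZMod L → ℂ) (hgreal : ∀ l : ZMod L, (g l).im = 0)
    (hframe : Function.Bijective (frameOp L a M g))
    (γ : ZMod L → ℂ) (hγ : frameOp L a M g γ = g) :
    ∀ l : ZMod L, (γ l).im = 0 := by
  have : NeZero M := ⟨hM.ne'⟩
  have hg : star g = g := funext fun l => Complex.conj_eq_iff_im.mpr (hgreal l)
  have hγ_star : star γ = γ := hframe.injective <|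
    calc frameOp L a M g (star γ) = frameOp L a M (star g) (star γ) := by rw [hg]
      _ = star (frameOp L a M g γ) := frameOp_star L a M g γ
      _ = frameOp L a M g γ := by rw [hγ, hg]
  exact fun l => Complex.conj_eq_iff_im.mp (congrFun hγ_star l)

/-- if `g ∈ ℂ^L` is real-valued and `G(g,a,M)` is a frame (its frame
operator `S` is invertible), then the canonical dual window `S⁻¹g` is real-valued. -/
theorem canonical_dual_real
    (L a M : ℕ) [NeZero L] (ha : 0 < a) (hM : 0 < M) (haL : a ∣ L) (hML : M ∣ L)
    (g : ZMod L → ℂ) (hgreal : ∀ l : ZMod L, (g l).im = 0)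
    (hframe : Function.Bijective (frameOp L a M g))
    (γ : ZMod L → ℂ) (hγ : frameOp L a M g γ = g) :
    ∀ l : ZMod L, (γ l).im = 0 :=
  canonical_dual_real_general L a M hM g hgreal hframe γ hγ
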